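/- For r ∈ [0, 1] and n ∈ ℕ define K_n(r) := ∫_0^∞ (ln(1+x))^{n r} e^{-x} dx, and for r₁, r₂ ∈ [0, 1] define m_n := (n!)^2 K_n(r₁) K_n(r₂). Then for every choice of r₁, r₂ ∈ [0, 1], the sequence (m_n) satisfies Carleman's condition ∑_{n=1}^∞ m_n^{-1/(2n)} = ∞; and if in addition max(r₁, r₂) > 0, then (m_n) does not satisfy the quadratic rate of growth condition, i.e., there is no constant C > 0 such that m_{n+1} ≤ C (n+1)^2 m_n for all n ≥ 1. -/

import Mathlib

/-!
Write `Kₙ(r) = logMoment (n r)` with `logMoment p = ∫₀^∞ log(1+x)^p e^{-x} dx`.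

Carleman: for `0 ≤ p ≤ n`, the estimates `t^p ≤ 1 + tⁿ` and `log(1+x) ≤ log n + x/n`, integrated
against `e^{-x}` (with `∫ xⁿ e^{-x} = n! ≤ nⁿ`), give `logMoment p ≤ (2(1 + log n))ⁿ`. Hence
`m_n^{1/(2n)} ≤ 2n(1 + log n)`, and Carleman's series dominates the divergent `∑ 1/(n(1 + log n))`.

No quadratic growth: restricting the integral to `x > e^T - 1` gives `logMoment p ≥ T^p e^{1-e^T}`,
so for `r = max r₁ r₂ > 0` the product `Kₙ(r₁)Kₙ(r₂)` is at least `D Bⁿ` for any prescribed `B`,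
with some `D > 0`. After cancelling `(n+1)²(n!)²`, the growth condition says
`Kₙ₊₁(r₁)Kₙ₊₁(r₂) ≤ C Kₙ(r₁)Kₙ(r₂)`, which is incompatible with `B = 2C`.
-/

open MeasureTheory Filter Topology Real Set

noncomputable def logMoment (p : ℝ) : ℝ :=
  ∫ x in Ioi 0, log (1 + x) ^ p * exp (-x)

lemma integrableOn_rpow_mul_exp_neg {p : ℝ} (hp : 0 ≤ p) :
    IntegrableOn (fun x : ℝ => x ^ p * exp (-x)) (Ioi 0) :=
  (GammaIntegral_convergent (s := p + 1) (by linarith)).congr_fun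
    (fun x _ => by simp [mul_comm]) measurableSet_Ioi

lemma integral_pow_mul_exp_neg (n : ℕ) : ∫ x in Ioi 0, x ^ n * exp (-x) = n.factorial := by
  rw [← Gamma_nat_eq_factorial, Gamma_eq_integral (by positivity)]
  refine setIntegral_congr_fun measurableSet_Ioi fun x _ => ?_
  simp [mul_comm]

lemma integrableOn_log_one_add_rpow_mul_exp_neg {p : ℝ} (hp : 0 ≤ p) :
    IntegrableOn (fun x : ℝ => log (1 + x) ^ p * exp (-x)) (Ioi 0) := by
  refine (integrableOn_rpow_mul_exp_neg hp).mono' (by fun_prop) ?_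
  filter_upwards [ae_restrict_mem measurableSet_Ioi] with x (hx : 0 < x)
  have := log_nonneg (show 1 ≤ 1 + x by linarith)
  have : log (1 + x) ≤ x := by linarith [log_le_sub_one_of_pos (show 0 < 1 + x by linarith)]
  rw [norm_of_nonneg (by positivity)]
  gcongr

lemma rpow_mul_exp_one_sub_exp_le_logMoment {p T : ℝ} (hp : 0 ≤ p) (hT : 0 ≤ T) :
    T ^ p * exp (1 - exp T) ≤ logMoment p := by
  set c := exp T - 1
  have hc : 0 ≤ c := sub_nonneg.2 (one_le_exp hT)
  calc T ^ p * exp (1 - exp T) = ∫ x in Ioi c, T ^ p * exp (-x) := by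
        rw [integral_const_mul, integral_exp_neg_Ioi]; simp [c]
    _ ≤ ∫ x in Ioi c, log (1 + x) ^ p * exp (-x) := by
        refine setIntegral_mono_on ((integrableOn_exp_neg_Ioi c).const_mul _)
          ((integrableOn_log_one_add_rpow_mul_exp_neg hp).mono_set (Ioi_subset_Ioi hc))
          measurableSet_Ioi fun x (hx : c < x) => ?_
        have : T ≤ log (1 + x) := by
          rw [le_log_iff_exp_le (by linarith)]; linarith
        gcongr
    _ ≤ logMoment p := by
        refine setIntegral_mono_set (integrableOn_log_one_add_rpow_mul_exp_neg hp) ?_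
          (Ioi_subset_Ioi hc).eventuallyLE
        filter_upwards [ae_restrict_mem measurableSet_Ioi] with x (hx : 0 < x)
        have := log_nonneg (show 1 ≤ 1 + x by linarith)
        positivity

lemma exp_one_sub_exp_one_le_logMoment {p : ℝ} (hp : 0 ≤ p) :
    exp (1 - exp 1) ≤ logMoment p := by
  simpa using rpow_mul_exp_one_sub_exp_le_logMoment hp zero_le_one

lemma logMoment_pos {p : ℝ} (hp : 0 ≤ p) : 0 < logMoment p :=
  (exp_pos _).trans_le (exp_one_sub_exp_one_le_logMoment hp)

lemma log_one_add_le_log_add_div {a x : ℝ} (ha : 1 ≤ a) (hx : -1 < x) :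
    log (1 + x) ≤ log a + x / a := by
  have h := log_le_sub_one_of_pos (show 0 < (1 + x) / a from div_pos (by linarith) (by linarith))
  rw [log_div (by linarith) (by linarith), add_div] at h
  have : 1 / a ≤ 1 := by rw [div_le_one (by linarith)]; exact ha
  linarith

lemma rpow_le_one_add_pow {t p : ℝ} {n : ℕ} (ht : 0 ≤ t) (hp : 0 ≤ p) (hpn : p ≤ n) :
    t ^ p ≤ 1 + t ^ n := by
  rcases le_total t 1 with h | h
  · linarith [rpow_le_one ht h hp, pow_nonneg ht n]
  · linarith [rpow_natCast t n ▸ rpow_le_rpow_of_exponent_le h hpn]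

lemma logMoment_le {p a : ℝ} {n : ℕ} (hp : 0 ≤ p) (hpn : p ≤ n) (ha : 1 ≤ a) :
    logMoment p ≤ 1 + 2 ^ (n - 1) * (log a ^ n + n.factorial / a ^ n) := by
  have hbound : ∀ x ∈ Ioi (0 : ℝ), log (1 + x) ^ p * exp (-x) ≤
      exp (-x) + 2 ^ (n - 1) * (log a ^ n * exp (-x) + (a ^ n)⁻¹ * (x ^ n * exp (-x))) := by
    intro x (hx : 0 < x)
    have hlog := log_nonneg (show 1 ≤ 1 + x by linarith)
    calc log (1 + x) ^ p * exp (-x) ≤ (1 + (log a + x / a) ^ n) * exp (-x) := by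
          gcongr
          exact (rpow_le_one_add_pow hlog hp hpn).trans
            (by gcongr; exact log_one_add_le_log_add_div ha (by linarith))
      _ ≤ (1 + 2 ^ (n - 1) * (log a ^ n + (x / a) ^ n)) * exp (-x) := by
          gcongr
          exact add_pow_le (log_nonneg ha) (by positivity) n
      _ = _ := by rw [div_pow]; ring
  have hint := integrableOn_exp_neg_Ioi 0
  have hintpow : IntegrableOn (fun x : ℝ => x ^ n * exp (-x)) (Ioi 0) := by
    simpa using integrableOn_rpow_mul_exp_neg (Nat.cast_nonneg (α := ℝ) n)
  have hint' : IntegrableOn (fun x : ℝ => log a ^ n * exp (-x) + (a ^ n)⁻¹ * (x ^ n * exp (-x)))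
      (Ioi 0) := (hint.const_mul _).add (hintpow.const_mul _)
  calc logMoment p ≤ ∫ x in Ioi 0, (exp (-x) +
        2 ^ (n - 1) * (log a ^ n * exp (-x) + (a ^ n)⁻¹ * (x ^ n * exp (-x)))) :=
        setIntegral_mono_on (integrableOn_log_one_add_rpow_mul_exp_neg hp)
          (hint.add (hint'.const_mul _)) measurableSet_Ioi hbound
    _ = 1 + 2 ^ (n - 1) * (log a ^ n + n.factorial / a ^ n) := by
        rw [integral_add hint (hint'.const_mul _), integral_const_mul,
          integral_add (hint.const_mul _) (hintpow.const_mul _), integral_const_mul,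
          integral_const_mul, integral_exp_neg_Ioi_zero, integral_pow_mul_exp_neg]
        ring

lemma logMoment_le_two_mul_one_add_log_pow {p : ℝ} {n : ℕ} (hn : n ≠ 0) (hp : 0 ≤ p)
    (hpn : p ≤ n) : logMoment p ≤ (2 * (1 + log n)) ^ n := by
  have hn1 : (1 : ℝ) ≤ n := by exact_mod_cast Nat.one_le_iff_ne_zero.2 hn
  have hlog := log_nonneg hn1
  have hfact : (n.factorial : ℝ) / (n : ℝ) ^ n ≤ 1 := by
    rw [div_le_one (by positivity)]; exact_mod_cast Nat.factorial_le_pow n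
  have hsum : log n ^ n + 1 ≤ (1 + log n) ^ n := by
    simpa [add_comm] using pow_add_pow_le hlog zero_le_one hn
  have hone : (1 : ℝ) ≤ 2 ^ (n - 1) * (1 + log n) ^ n :=
    one_le_mul_of_one_le_of_one_le (one_le_pow₀ one_le_two) (one_le_pow₀ (by linarith))
  calc logMoment p ≤ 1 + 2 ^ (n - 1) * (log n ^ n + n.factorial / (n : ℝ) ^ n) :=
        logMoment_le hp hpn hn1
    _ ≤ 2 * (2 ^ (n - 1) * (1 + log n) ^ n) := by
        nlinarith [pow_nonneg (zero_le_two (α := ℝ)) (n - 1)]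
    _ = (2 * (1 + log n)) ^ n := by
        rw [mul_pow, ← mul_assoc, ← pow_succ', Nat.sub_add_cancel (Nat.one_le_iff_ne_zero.2 hn)]

lemma inv_le_rpow_neg_one_div_of_le_pow {y B : ℝ} {k : ℕ} (hk : k ≠ 0) (hy : 0 < y)
    (hB : 0 < B) (h : y ≤ B ^ k) : B⁻¹ ≤ y ^ (-1 / (k : ℝ)) := by
  rw [neg_div, rpow_neg hy.le]
  refine inv_anti₀ (by positivity) ?_
  calc y ^ (1 / (k : ℝ)) ≤ (B ^ k) ^ (1 / (k : ℝ)) := by gcongr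
    _ = B := by rw [one_div, pow_rpow_inv_natCast hB.le hk]

lemma half_inv_mul_one_add_log_le_moment_rpow {n : ℕ} {p q : ℝ} (hn : n ≠ 0)
    (hp : p ∈ Icc 0 (n : ℝ)) (hq : q ∈ Icc 0 (n : ℝ)) :
    2⁻¹ * ((n : ℝ) * (1 + log n))⁻¹ ≤
      ((n.factorial : ℝ) ^ 2 * logMoment p * logMoment q) ^ (-(1 : ℝ) / (2 * n)) := by
  have hn1 : (1 : ℝ) ≤ n := by exact_mod_cast Nat.one_le_iff_ne_zero.2 hn
  have hlog := log_nonneg hn1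
  have hfact : (n.factorial : ℝ) ≤ (n : ℝ) ^ n := by exact_mod_cast Nat.factorial_le_pow n
  have hmoment : (n.factorial : ℝ) ^ 2 * logMoment p * logMoment q ≤
      (2 * n * (1 + log n)) ^ (2 * n) := by
    calc (n.factorial : ℝ) ^ 2 * logMoment p * logMoment q
        ≤ ((n : ℝ) ^ n) ^ 2 * (2 * (1 + log n)) ^ n * (2 * (1 + log n)) ^ n := by
          have := logMoment_le_two_mul_one_add_log_pow hn hp.1 hp.2
          have := logMoment_le_two_mul_one_add_log_pow hn hq.1 hq.2
          gcongr
          exacts [(logMoment_pos hq.1).le, (logMoment_pos hp.1).le]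
      _ = ((n : ℝ) ^ n * (2 * (1 + log n)) ^ n) ^ 2 := by ring
      _ = (2 * n * (1 + log n)) ^ (2 * n) := by
          rw [← mul_pow, ← pow_mul', ← mul_assoc, mul_comm (n : ℝ)]
  calc 2⁻¹ * ((n : ℝ) * (1 + log n))⁻¹ = (2 * n * (1 + log n))⁻¹ := by
        rw [mul_assoc, ← mul_inv]
    _ ≤ _ := inv_le_rpow_neg_one_div_of_le_pow (k := 2 * n) (by omega)
        (by have := logMoment_pos hp.1; have := logMoment_pos hq.1; positivity) (by positivity)
        hmoment
    _ = _ := by push_cast; rfl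

lemma not_summable_inv_mul_one_add_log :
    ¬ Summable (fun n : ℕ => ((n : ℝ) * (1 + log n))⁻¹) := by
  set g : ℕ → ℝ := fun n => ((n : ℝ) * (1 + log n))⁻¹
  have hg : ∀ n, 0 ≤ g n := fun n => by
    rcases Nat.eq_zero_or_pos n with rfl | hn
    · simp [g]
    · have := log_nonneg (show (1 : ℝ) ≤ n by exact_mod_cast hn); positivity
  have hanti : ∀ ⦃a b : ℕ⦄, 0 < a → a ≤ b → g b ≤ g a := fun a b ha hab => by
    have ha' : (1 : ℝ) ≤ a := by exact_mod_cast ha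
    have hab' : (a : ℝ) ≤ b := by exact_mod_cast hab
    have := log_nonneg ha'
    have := log_le_log (by linarith) hab'
    exact inv_anti₀ (by positivity) (by gcongr)
  rw [← summable_condensed_iff_of_nonneg hg hanti]
  intro hs
  -- the condensed series is `∑ (1 + k log 2)⁻¹`, which dominates the shifted harmonic series
  refine Real.not_summable_natCast_inv ((summable_nat_add_iff 1).1 (hs.of_nonneg_of_le
    (fun k => by positivity) fun k => ?_))
  have hlog2 : log 2 ≤ 1 := by linarith [log_le_sub_one_of_pos (show (0 : ℝ) < 2 by norm_num)]
  have hk : (2 : ℝ) ^ k * g (2 ^ k) = (1 + k * log 2)⁻¹ := by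
    simp only [g, Nat.cast_pow, Nat.cast_ofNat, log_pow]
    field_simp
  rw [hk]
  push_cast
  exact inv_anti₀ (by positivity) (by nlinarith [log_pos (show (1 : ℝ) < 2 by norm_num)])

lemma tendsto_sum_Icc_inv_mul_one_add_log :
    Tendsto (fun N : ℕ => ∑ n ∈ Finset.Icc 1 N, ((n : ℝ) * (1 + log n))⁻¹) atTop atTop := by
  have h := (not_summable_iff_tendsto_nat_atTop_of_nonneg fun n : ℕ => ?_).1
    not_summable_inv_mul_one_add_log |>.comp (tendsto_add_atTop_nat 1)
  · refine h.congr fun N => ?_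
    rw [Function.comp_apply, Finset.range_eq_Ico, Finset.sum_eq_sum_Ico_succ_bot N.succ_pos]
    simp only [CharP.cast_eq_zero, zero_mul, inv_zero, zero_add]
    rfl
  · rcases Nat.eq_zero_or_pos n with rfl | hn
    · simp
    · have := log_nonneg (show (1 : ℝ) ≤ n by exact_mod_cast hn); positivity

lemma not_forall_succ_le_mul_of_pow_le {a : ℕ → ℝ} {B C D : ℝ} (hC : 0 < C) (hCB : C < B)
    (hD : 0 < D) (hlow : ∀ n, D * B ^ n ≤ a n) : ¬ ∀ n, 1 ≤ n → a (n + 1) ≤ C * a n := by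
  intro hratio
  have hgeom (n : ℕ) : a (n + 1) ≤ C ^ n * a 1 :=
    le_geom (u := fun k => a (k + 1)) hC.le n fun k _ => hratio (k + 1) (by omega)
  have hB : 0 < B := hC.trans hCB
  obtain ⟨n, hn⟩ := ((tendsto_pow_atTop_atTop_of_one_lt ((one_lt_div hC).2 hCB)).const_mul_atTop
    (mul_pos hD hB)).eventually_gt_atTop (a 1) |>.exists
  refine hn.not_ge (le_of_mul_le_mul_left ?_ (pow_pos hC n))
  calc C ^ n * (D * B * (B / C) ^ n) = D * B ^ (n + 1) := by
        rw [div_pow, pow_succ]; field_simp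
    _ ≤ C ^ n * a 1 := (hlow (n + 1)).trans (hgeom n)

lemma exists_pow_le_logMoment {r B : ℝ} (hr : 0 < r) (hB : 0 ≤ B) :
    ∃ D > 0, ∀ n : ℕ, D * B ^ n ≤ logMoment (n * r) := by
  obtain ⟨T, hBT, hT⟩ :=
    ((tendsto_rpow_atTop hr).eventually_ge_atTop B).and (eventually_ge_atTop 0) |>.exists
  refine ⟨exp (1 - exp T), exp_pos _, fun n => ?_⟩
  calc exp (1 - exp T) * B ^ n ≤ exp (1 - exp T) * (T ^ r) ^ n := by gcongr
    _ = T ^ (n * r) * exp (1 - exp T) := by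
        rw [← rpow_natCast, ← rpow_mul hT, mul_comm r, mul_comm]
    _ ≤ logMoment (n * r) := rpow_mul_exp_one_sub_exp_le_logMoment (by positivity) hT

lemma exists_pow_le_logMoment_mul_logMoment {r₁ r₂ B : ℝ} (hr₁ : 0 ≤ r₁) (hr₂ : 0 ≤ r₂)
    (hr : 0 < max r₁ r₂) (hB : 0 ≤ B) :
    ∃ D > 0, ∀ n : ℕ, D * B ^ n ≤ logMoment (n * r₁) * logMoment (n * r₂) := by
  wlog h : r₂ ≤ r₁ generalizing r₁ r₂
  · obtain ⟨D, hD, hlow⟩ := this hr₂ hr₁ (max_comm r₁ r₂ ▸ hr) (by linarith)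
    exact ⟨D, hD, fun n => (hlow n).trans_eq (mul_comm _ _)⟩
  obtain ⟨D, hD, hlow⟩ := exists_pow_le_logMoment (max_eq_left h ▸ hr) hB
  refine ⟨D * exp (1 - exp 1), by positivity, fun n => ?_⟩
  calc D * exp (1 - exp 1) * B ^ n = D * B ^ n * exp (1 - exp 1) := by ring
    _ ≤ logMoment (n * r₁) * logMoment (n * r₂) :=
      mul_le_mul (hlow n) (exp_one_sub_exp_one_le_logMoment (by positivity))
        (exp_pos _).le (logMoment_pos (by positivity)).le

/-- For `r₁, r₂ ∈ [0,1]`, the moments `mₙ = (n!)² Kₙ(r₁) Kₙ(r₂)`, where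
`Kₙ(r) = ∫_0^∞ (ln(1+x))^{nr} e^{-x} dx`, satisfy Carleman's condition; and if
`max r₁ r₂ > 0` they do not satisfy the quadratic rate of growth condition. -/
theorem carleman_for_general_powers
    (r₁ r₂ : ℝ) (hr₁ : r₁ ∈ Set.Icc (0 : ℝ) 1) (hr₂ : r₂ ∈ Set.Icc (0 : ℝ) 1)
    (K : ℕ → ℝ → ℝ)
    (hK : ∀ n : ℕ, ∀ r : ℝ,
      K n r = ∫ x in Set.Ioi (0 : ℝ), (Real.log (1 + x)) ^ ((n : ℝ) * r) * Real.exp (-x))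
    (m : ℕ → ℝ)
    (hm : ∀ n : ℕ, m n = (n.factorial : ℝ) ^ 2 * K n r₁ * K n r₂) :
    Tendsto (fun N : ℕ => ∑ n ∈ Finset.Icc 1 N, m n ^ (-(1 : ℝ) / (2 * n)))
      atTop atTop ∧
    (0 < max r₁ r₂ →
      ¬ ∃ C : ℝ, 0 < C ∧ ∀ n : ℕ, 1 ≤ n → m (n + 1) ≤ C * (n + 1) ^ 2 * m n) := by
  have hK' (n : ℕ) (r : ℝ) : K n r = logMoment (n * r) := hK n r
  have hmem (n : ℕ) {r : ℝ} (hr : r ∈ Icc (0 : ℝ) 1) : n * r ∈ Icc 0 (n : ℝ) :=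
    ⟨mul_nonneg n.cast_nonneg hr.1, mul_le_of_le_one_right n.cast_nonneg hr.2⟩
  constructor
  · refine tendsto_atTop_mono (fun N => ?_)
      (tendsto_sum_Icc_inv_mul_one_add_log.const_mul_atTop (inv_pos.2 two_pos))
    rw [Finset.mul_sum]
    refine Finset.sum_le_sum fun n hn => ?_
    rw [hm, hK', hK']
    exact half_inv_mul_one_add_log_le_moment_rpow (by simp at hn; omega) (hmem n hr₁) (hmem n hr₂)
  · rintro hr ⟨C, hC, hgrowth⟩
    obtain ⟨D, hD, hlow⟩ := exists_pow_le_logMoment_mul_logMoment hr₁.1 hr₂.1 hr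
      (B := 2 * C) (by positivity)
    refine not_forall_succ_le_mul_of_pow_le (a := fun n => K n r₁ * K n r₂) (B := 2 * C) hC
      (by linarith) hD (fun n => by simpa only [hK'] using hlow n) fun n hn => ?_
    refine le_of_mul_le_mul_left (a := (((n + 1).factorial : ℝ)) ^ 2) ?_ (by positivity)
    calc _ = m (n + 1) := by rw [hm, mul_assoc]
      _ ≤ C * (n + 1) ^ 2 * m n := hgrowth n hn
      _ = _ := by rw [hm, Nat.factorial_succ]; push_cast; ring
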